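/- arXiv:2101.11091 — 3 statements merged into one kernel-verified Lean document; each statement's English description precedes it below -/
import Mathlib

section
/- Let x ∈ ℝⁿ and let K be a natural number with K ≤ n. Then the number of nonzero entries of x is at most K (i.e., ‖x‖₀ ≤ K) if and only if ‖x‖₁ − ‖x‖_{K,1} = 0, i.e., the ℓ₁-norm of x equals its top-(K,1) norm. -/
/-- Number of nonzero entries of a vector (the "ℓ₀-norm"). -/
noncomputable def l0norm {n : ℕ} (x : Fin n → ℝ) : ℕ :=
  (Finset.univ.filter fun i => x i ≠ 0).card

/-- The top-(K,1) norm: the maximum over all index sets `S` of cardinality `K`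
of the sum of the absolute values of the entries of `x` on `S`. -/
noncomputable def topNorm {n : ℕ} (K : ℕ) (x : Fin n → ℝ) : ℝ :=
  sSup { t : ℝ | ∃ S : Finset (Fin n), S.card = K ∧ t = ∑ i ∈ S, |x i| }

theorem stmt0 {n : ℕ} (K : ℕ) (hK : K ≤ n) (x : Fin n → ℝ) :
    l0norm x ≤ K ↔ (∑ i, |x i|) - topNorm K x = 0 := by
  set T : Set ℝ := { t : ℝ | ∃ S : Finset (Fin n), S.card = K ∧ t = ∑ i ∈ S, |x i| }
  have hTfin : T.Finite := by
    have : T ⊆ (fun S : Finset (Fin n) => ∑ i ∈ S, |x i|) '' Set.univ := by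
      rintro t ⟨S, _, rfl⟩
      exact ⟨S, trivial, rfl⟩
    exact Set.Finite.subset (Set.finite_univ.image _) this
  have hTne : T.Nonempty := by
    obtain ⟨S, -, hS⟩ := Finset.exists_superset_card_eq
      (s := (∅ : Finset (Fin n))) (by simp) (by simpa using hK)
    exact ⟨∑ i ∈ S, |x i|, S, hS, rfl⟩
  have hub : ∀ t ∈ T, t ≤ ∑ i, |x i| := by
    rintro t ⟨S, -, rfl⟩
    exact Finset.sum_le_sum_of_subset_of_nonneg (Finset.subset_univ S)
      (fun i _ _ => abs_nonneg _)
  have hbdd : BddAbove T := ⟨∑ i, |x i|, hub⟩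
  have hle : topNorm K x ≤ ∑ i, |x i| := csSup_le hTne hub
  constructor
  · intro h
    have hsub : (Finset.univ.filter fun i => x i ≠ 0) ⊆ Finset.univ := Finset.subset_univ _
    obtain ⟨S, hSsub, hScard⟩ := Finset.exists_superset_card_eq
      (s := Finset.univ.filter fun i => x i ≠ 0) h (by simpa using hK)
    have hsum : ∑ i ∈ S, |x i| = ∑ i, |x i| := by
      refine Finset.sum_subset (f := fun i => |x i|) (Finset.subset_univ S) ?_
      intro i _ hiS
      have : x i = 0 := by
        by_contra hx
        exact hiS (hSsub (by simp [hx]))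
      simp [this]
    have hmem : (∑ i, |x i|) ∈ T := ⟨S, hScard, hsum.symm⟩
    have : ∑ i, |x i| ≤ topNorm K x := le_csSup hbdd hmem
    linarith
  · intro h
    have heq : topNorm K x = ∑ i, |x i| := by linarith
    have hmem : topNorm K x ∈ T := hTne.csSup_mem hTfin
    obtain ⟨S, hScard, hS⟩ := hmem
    have h0 : ∑ i ∈ Finset.univ \ S, |x i| = 0 := by
      have := Finset.sum_sdiff (Finset.subset_univ S) (f := fun i => |x i|)
      rw [heq] at hS
      linarith
    have hall : ∀ i ∈ Finset.univ \ S, |x i| = 0 :=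
      (Finset.sum_eq_zero_iff_of_nonneg (fun i _ => abs_nonneg _)).mp h0
    have hsub : (Finset.univ.filter fun i => x i ≠ 0) ⊆ S := by
      intro i hi
      by_contra hiS
      have : |x i| = 0 := hall i (by simp [hiS])
      simp at hi
      exact hi (abs_eq_zero.mp this)
    calc l0norm x ≤ S.card := Finset.card_le_card hsub
      _ = K := hScard
end

section
/- Let x ∈ ℝⁿ and let K be a natural number with K + 1 ≤ n. Then ‖x‖₀ ≤ K if and only if ‖x‖_{K+1,1} − ‖x‖_{K,1} = 0, i.e., the (K+1)-th largest absolute value of the entries of x is zero. -/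
lemma topNorm_setEq {n : ℕ} (K : ℕ) (x : Fin n → ℝ) :
    { t : ℝ | ∃ S : Finset (Fin n), S.card = K ∧ t = ∑ i ∈ S, |x i| } =
      ↑((Finset.univ.powersetCard K).image fun S => ∑ i ∈ S, |x i|) := by
  ext t
  simp only [Set.mem_setOf_eq, Finset.coe_image, Set.mem_image, Finset.mem_coe,
    Finset.mem_powersetCard]
  constructor
  · rintro ⟨S, hS, rfl⟩; exact ⟨S, ⟨Finset.subset_univ _, hS⟩, rfl⟩
  · rintro ⟨S, ⟨_, hS⟩, rfl⟩; exact ⟨S, hS, rfl⟩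

lemma topNorm_isGreatest {n : ℕ} (K : ℕ) (hK : K ≤ n) (x : Fin n → ℝ) :
    IsGreatest { t : ℝ | ∃ S : Finset (Fin n), S.card = K ∧ t = ∑ i ∈ S, |x i| }
      (topNorm K x) := by
  have hfin : { t : ℝ | ∃ S : Finset (Fin n), S.card = K ∧ t = ∑ i ∈ S, |x i| }.Finite := by
    rw [topNorm_setEq]; exact Finset.finite_toSet _
  have hne : { t : ℝ | ∃ S : Finset (Fin n), S.card = K ∧ t = ∑ i ∈ S, |x i| }.Nonempty := by
    obtain ⟨S, -, hS⟩ := Finset.exists_subset_card_eq (s := (Finset.univ : Finset (Fin n))) (n := K)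
      (by simpa using hK)
    exact ⟨_, S, hS, rfl⟩
  exact ⟨hne.csSup_mem hfin, fun t ht => le_csSup hfin.bddAbove ht⟩

theorem stmt1 {n : ℕ} (K : ℕ) (hK : K + 1 ≤ n) (x : Fin n → ℝ) :
    l0norm x ≤ K ↔ topNorm (K + 1) x - topNorm K x = 0 := by
  have hK' : K ≤ n := Nat.le_of_succ_le hK
  obtain ⟨hmemK, hubK⟩ := topNorm_isGreatest K hK' x
  obtain ⟨hmemK1, hubK1⟩ := topNorm_isGreatest (K + 1) hK x
  obtain ⟨T, hTcard, hTsum⟩ := hmemK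
  -- topNorm K ≤ topNorm (K+1) always
  have hmono : topNorm K x ≤ topNorm (K + 1) x := by
    obtain ⟨T', hTT', hT'card⟩ := Finset.exists_superset_card_eq (s := T) (n := K + 1) (by omega) (by simpa using hK)
    have : topNorm K x ≤ ∑ i ∈ T', |x i| := by
      rw [hTsum]
      exact Finset.sum_le_sum_of_subset_of_nonneg hTT' (fun i _ _ => abs_nonneg _)
    exact this.trans (hubK1 ⟨T', hT'card, rfl⟩)
  constructor
  · intro h
    have hle : topNorm (K + 1) x ≤ topNorm K x := by
      obtain ⟨S, hScard, hSsum⟩ := hmemK1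
      set S' := S.filter (fun i => x i ≠ 0) with hS'
      have hS'card : S'.card ≤ K := by
        calc S'.card ≤ (Finset.univ.filter fun i => x i ≠ 0).card :=
              Finset.card_le_card (Finset.filter_subset_filter _ (Finset.subset_univ S))
          _ ≤ K := h
      have hsum_eq : ∑ i ∈ S, |x i| = ∑ i ∈ S', |x i| := by
        rw [hS']
        refine (Finset.sum_filter_of_ne ?_).symm
        intro i _ hne
        intro hxi
        exact hne (by simp [hxi])
      obtain ⟨T', hTT', hT'card⟩ := Finset.exists_superset_card_eq (s := S') (n := K) hS'card
        (by simpa using hK')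
      have : ∑ i ∈ S', |x i| ≤ ∑ i ∈ T', |x i| :=
        Finset.sum_le_sum_of_subset_of_nonneg hTT' (fun i _ _ => abs_nonneg _)
      calc topNorm (K + 1) x = ∑ i ∈ S', |x i| := by rw [hSsum, hsum_eq]
        _ ≤ ∑ i ∈ T', |x i| := this
        _ ≤ topNorm K x := hubK ⟨T', hT'card, rfl⟩
    linarith
  · intro h
    by_contra hcon
    push_neg at hcon
    -- there is a nonzero entry outside T
    have : ∃ i, x i ≠ 0 ∧ i ∉ T := by
      by_contra hall
      push_neg at hall
      have : (Finset.univ.filter fun i => x i ≠ 0) ⊆ T := by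
        intro i hi
        simp only [Finset.mem_filter] at hi
        exact hall i hi.2
      have := Finset.card_le_card this
      rw [hTcard] at this
      exact absurd this (by unfold l0norm at hcon; omega)
    obtain ⟨i, hxi, hiT⟩ := this
    have hstrict : topNorm K x < topNorm (K + 1) x := by
      have hins : (insert i T).card = K + 1 := by rw [Finset.card_insert_of_notMem hiT, hTcard]
      have hsum : ∑ j ∈ insert i T, |x j| = |x i| + ∑ j ∈ T, |x j| :=
        Finset.sum_insert hiT
      have : topNorm K x < ∑ j ∈ insert i T, |x j| := by
        rw [hsum, hTsum]
        have : 0 < |x i| := abs_pos.mpr hxi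
        linarith
      exact this.trans_le (hubK1 ⟨insert i T, hins, rfl⟩)
    linarith
end

section
/- (Theorem 1) Let Φ ∈ ℝ^{m×n}, y ∈ ℝᵐ, K ≤ n, and for ρ > 0 define F_ρ(x) = ½‖y − Φx‖₂² + ρ(‖x‖₁ − ‖x‖_{K,1}). Let ρ* > 0 and let x* be a global minimizer of F_{ρ*} over ℝⁿ. Suppose there is a constant q > 0 with ‖x*‖₂ ≤ q, and suppose ρ* > max_{1≤i≤n} { q(‖ΦᵀΦeᵢ‖₂ + |(ΦᵀΦ)_{ii}|/2) + |(Φᵀy)ᵢ| }, where eᵢ is the i-th standard basis vector. Then ‖x*‖₀ ≤ K, and x* is optimal for the constrained problem: for every x ∈ ℝⁿ with ‖x‖₀ ≤ K one has ½‖y − Φx*‖₂² ≤ ½‖y − Φx‖₂². -/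
open Matrix

/-- Euclidean (ℓ₂) norm of a vector. -/
noncomputable def l2norm {k : ℕ} (v : Fin k → ℝ) : ℝ :=
  Real.sqrt (∑ i, (v i) ^ 2)


lemma l2sq {k : ℕ} (v : Fin k → ℝ) : (l2norm v) ^ 2 = ∑ i, v i ^ 2 :=
  Real.sq_sqrt (Finset.sum_nonneg fun i _ => sq_nonneg _)

lemma l2_nonneg {k : ℕ} (v : Fin k → ℝ) : 0 ≤ l2norm v := Real.sqrt_nonneg _

lemma abs_le_l2 {k : ℕ} (v : Fin k → ℝ) (i : Fin k) : |v i| ≤ l2norm v := by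
  rw [l2norm, ← Real.sqrt_sq_eq_abs]
  exact Real.sqrt_le_sqrt (Finset.single_le_sum (fun j _ => sq_nonneg (v j)) (Finset.mem_univ i))

lemma cs {k : ℕ} (u v : Fin k → ℝ) : |∑ i, u i * v i| ≤ l2norm u * l2norm v := by
  rw [← Real.sqrt_sq_eq_abs, l2norm, l2norm,
    ← Real.sqrt_mul (Finset.sum_nonneg fun i _ => sq_nonneg _)]
  exact Real.sqrt_le_sqrt (Finset.sum_mul_sq_le_sq_mul_sq Finset.univ u v)

lemma topSet_finite {n : ℕ} (K : ℕ) (x : Fin n → ℝ) :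
    { t : ℝ | ∃ S : Finset (Fin n), S.card = K ∧ t = ∑ i ∈ S, |x i| }.Finite := by
  have h : { t : ℝ | ∃ S : Finset (Fin n), S.card = K ∧ t = ∑ i ∈ S, |x i| } ⊆
      Set.range fun S : Finset (Fin n) => ∑ i ∈ S, |x i| := by
    rintro t ⟨S, _, rfl⟩; exact ⟨S, rfl⟩
  exact (Set.finite_range _).subset h

lemma top_ge {n K : ℕ} (x : Fin n → ℝ) (S : Finset (Fin n)) (hS : S.card = K) :
    ∑ i ∈ S, |x i| ≤ topNorm K x :=
  le_csSup (topSet_finite K x).bddAbove ⟨S, hS, rfl⟩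

lemma top_mem {n K : ℕ} (hK : K ≤ n) (x : Fin n → ℝ) :
    ∃ S : Finset (Fin n), S.card = K ∧ topNorm K x = ∑ i ∈ S, |x i| := by
  obtain ⟨S, -, hS⟩ := Finset.exists_subset_card_eq (s := (Finset.univ : Finset (Fin n))) (by simpa)
  have hne : { t : ℝ | ∃ S : Finset (Fin n), S.card = K ∧ t = ∑ i ∈ S, |x i| }.Nonempty :=
    ⟨_, S, hS, rfl⟩
  exact hne.csSup_mem (topSet_finite K x)

lemma top_le_l1 {n K : ℕ} (hK : K ≤ n) (x : Fin n → ℝ) : topNorm K x ≤ ∑ i, |x i| := by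
  obtain ⟨S, -, hS⟩ := top_mem hK x
  rw [hS]
  exact Finset.sum_le_sum_of_subset_of_nonneg S.subset_univ fun i _ _ => abs_nonneg _

lemma top_eq_l1 {n K : ℕ} (hK : K ≤ n) (x : Fin n → ℝ) (hx : l0norm x ≤ K) :
    topNorm K x = ∑ i, |x i| := by
  refine le_antisymm (top_le_l1 hK x) ?_
  obtain ⟨T, hsub, hT⟩ := Finset.exists_superset_card_eq (s := Finset.univ.filter fun i => x i ≠ 0)
    hx (by simpa)
  have : ∑ i, |x i| = ∑ i ∈ T, |x i| := by
    refine (Finset.sum_subset T.subset_univ fun i _ hiT => ?_).symm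
    have : x i = 0 := by
      by_contra h
      exact hiT (hsub (Finset.mem_filter.2 ⟨Finset.mem_univ i, h⟩))
    simp [this]
  rw [this]
  exact top_ge x T hT

theorem stmt2 {m n : ℕ} (Φ : Matrix (Fin m) (Fin n) ℝ) (y : Fin m → ℝ)
    (K : ℕ) (hK : K ≤ n) (ρStar : ℝ) (hρpos : 0 < ρStar)
    (F : ℝ → (Fin n → ℝ) → ℝ)
    (hF : ∀ ρ x, F ρ x =
      (1 / 2) * (l2norm (y - Φ.mulVec x)) ^ 2 + ρ * ((∑ i, |x i|) - topNorm K x))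
    (xStar : Fin n → ℝ)
    (hmin : ∀ x : Fin n → ℝ, F ρStar xStar ≤ F ρStar x)
    (q : ℝ) (hq : 0 < q) (hxq : l2norm xStar ≤ q)
    (hρ : ∀ i : Fin n, ρStar >
      q * (l2norm ((Φᵀ * Φ).mulVec (Pi.single i 1)) + |(Φᵀ * Φ) i i| / 2)
        + |(Φᵀ.mulVec y) i|) :
    l0norm xStar ≤ K ∧
      ∀ x : Fin n → ℝ, l0norm x ≤ K →
        (1 / 2) * (l2norm (y - Φ.mulVec xStar)) ^ 2 ≤
          (1 / 2) * (l2norm (y - Φ.mulVec x)) ^ 2 := by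
  have hsp : l0norm xStar ≤ K := by
    by_contra hlt
    push_neg at hlt
    obtain ⟨S, hScard, hStop⟩ := top_mem hK xStar
    have hns : ¬ (Finset.univ.filter fun i => xStar i ≠ 0) ⊆ S := by
      intro hsub
      have := Finset.card_le_card hsub
      rw [hScard] at this
      exact absurd (this.trans_lt hlt) (lt_irrefl _)
    obtain ⟨i, hi_mem, hiS⟩ := Finset.not_subset.1 hns
    have hxi : xStar i ≠ 0 := (Finset.mem_filter.1 hi_mem).2
    set c : ℝ := xStar i with hc
    set x' : Fin n → ℝ := Function.update xStar i 0 with hx'def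
    -- x' = xStar - c • eᵢ
    have hx' : x' = xStar - c • (Pi.single i 1 : Fin n → ℝ) := by
      funext j
      by_cases h : j = i
      · subst h; simp [hx'def, hc]
      · simp [hx'def, Function.update_of_ne h, Pi.single_eq_of_ne h]
    have hmv : Φ.mulVec x' = fun j => Φ.mulVec xStar j - c * Φ j i := by
      rw [hx', Matrix.mulVec_sub, Matrix.mulVec_smul, Matrix.mulVec_single]
      funext j
      simp [mul_comm]
    have hres : y - Φ.mulVec x' =
        fun j => (y - Φ.mulVec xStar) j + c * Φ j i := by
      funext j
      simp only [Pi.sub_apply, hmv]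
      ring
    -- data term expansion
    have hdata : (l2norm (y - Φ.mulVec x')) ^ 2 =
        (l2norm (y - Φ.mulVec xStar)) ^ 2
          + 2 * c * (∑ j, (y - Φ.mulVec xStar) j * Φ j i)
          + c ^ 2 * ∑ j, (Φ j i) ^ 2 := by
      rw [hres, l2sq, l2sq]
      have : ∀ j, ((y - Φ.mulVec xStar) j + c * Φ j i) ^ 2 =
          (y - Φ.mulVec xStar) j ^ 2 + 2 * c * ((y - Φ.mulVec xStar) j * Φ j i)
            + c ^ 2 * (Φ j i) ^ 2 := fun j => by ring
      simp_rw [this]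
      rw [Finset.sum_add_distrib, Finset.sum_add_distrib, ← Finset.mul_sum, ← Finset.mul_sum]
    -- ℓ₁ term
    have habs : (fun j => |x' j|) = Function.update (fun j => |xStar j|) i 0 := by
      funext j
      by_cases h : j = i
      · subst h; simp [hx'def]
      · simp [hx'def, Function.update_of_ne h]
    have hl1 : ∑ j, |x' j| = (∑ j, |xStar j|) - |c| := by
      have h1 : ∑ j, |x' j| = 0 + ∑ j ∈ Finset.univ \ {i}, |xStar j| := by
        rw [show (∑ j, |x' j|) = ∑ j, Function.update (fun j => |xStar j|) i 0 j by
          rw [← habs]]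
        exact Finset.sum_update_of_mem (Finset.mem_univ i) _ _
      have h2 : ∑ j, |xStar j| = (∑ j ∈ Finset.univ \ {i}, |xStar j|) + |xStar i| := by
        rw [Finset.sum_eq_sum_sdiff_singleton_add (Finset.mem_univ i)]
      rw [h1, h2, hc]
      ring
    -- top norm doesn't drop
    have htop : topNorm K xStar ≤ topNorm K x' := by
      rw [hStop]
      have : ∑ j ∈ S, |xStar j| = ∑ j ∈ S, |x' j| :=
        Finset.sum_congr rfl fun j hj => by
          rw [hx'def, Function.update_of_ne (fun h => hiS (by rwa [← h]))]
      rw [this]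
      exact top_ge x' S hScard
    -- inner product identities
    have h2 : ((Φᵀ * Φ).mulVec xStar) i = ∑ j, (Φ.mulVec xStar) j * Φ j i := by
      simp only [Matrix.mulVec, dotProduct, Matrix.mul_apply, Matrix.transpose_apply,
        Finset.sum_mul, Finset.mul_sum]
      rw [Finset.sum_comm]
      exact Finset.sum_congr rfl fun j _ => Finset.sum_congr rfl fun k _ => by ring
    have h3 : (Φᵀ.mulVec y) i = ∑ j, y j * Φ j i := by
      simp only [Matrix.mulVec, dotProduct, Matrix.transpose_apply]
      exact Finset.sum_congr rfl fun j _ => by ring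
    have hab : ∑ j, (y - Φ.mulVec xStar) j * Φ j i =
        (Φᵀ.mulVec y) i - ((Φᵀ * Φ).mulVec xStar) i := by
      rw [h2, h3, ← Finset.sum_sub_distrib]
      exact Finset.sum_congr rfl fun j _ => by simp [Pi.sub_apply]; ring
    have hB : ∑ j, (Φ j i) ^ 2 = (Φᵀ * Φ) i i := by
      simp [Matrix.mul_apply, sq]
    have hBnn : (0:ℝ) ≤ (Φᵀ * Φ) i i := by
      rw [← hB]; exact Finset.sum_nonneg fun j _ => sq_nonneg _
    -- Cauchy-Schwarz bound
    have hw : (Φᵀ * Φ).mulVec (Pi.single i 1) = fun k => (Φᵀ * Φ) k i := by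
      rw [Matrix.mulVec_single]; funext k; simp
    have hsym : ∀ k, (Φᵀ * Φ) i k = (Φᵀ * Φ) k i := fun k => by
      simp [Matrix.mul_apply, mul_comm]
    have hcs : |((Φᵀ * Φ).mulVec xStar) i| ≤
        l2norm ((Φᵀ * Φ).mulVec (Pi.single i 1)) * q := by
      have h4 : ((Φᵀ * Φ).mulVec xStar) i =
          ∑ k, ((Φᵀ * Φ).mulVec (Pi.single i 1)) k * xStar k := by
        simp only [hw]
        simp only [Matrix.mulVec, dotProduct]
        exact Finset.sum_congr rfl fun k _ => by rw [hsym k]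
      rw [h4]
      calc |∑ k, ((Φᵀ * Φ).mulVec (Pi.single i 1)) k * xStar k|
          ≤ l2norm ((Φᵀ * Φ).mulVec (Pi.single i 1)) * l2norm xStar := cs _ _
        _ ≤ l2norm ((Φᵀ * Φ).mulVec (Pi.single i 1)) * q := by
            exact mul_le_mul_of_nonneg_left hxq (l2_nonneg _)
    have hci : |c| ≤ q := (abs_le_l2 xStar i).trans hxq
    have hcpos : 0 < |c| := abs_pos.2 hxi
    -- assemble
    have hmin' := hmin x'
    rw [hF, hF, hdata, hl1] at hmin'
    -- abbreviations
    set I : ℝ := ∑ j, (y - Φ.mulVec xStar) j * Φ j i with hI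
    set B : ℝ := (Φᵀ * Φ) i i with hBdef
    set w : ℝ := l2norm ((Φᵀ * Φ).mulVec (Pi.single i 1)) with hwdef
    rw [hB] at hmin'
    have hIb : |I| ≤ |(Φᵀ.mulVec y) i| + w * q := by
      rw [hab]
      exact (abs_sub _ _).trans (by linarith [hcs])
    have hρi := hρ i
    have hwnn : 0 ≤ w := l2_nonneg _
    -- from hmin' : F xStar ≤ F x'
    have h5 : ρStar * ((∑ j, |xStar j|) - |c| - topNorm K x') ≤
        ρStar * ((∑ j, |xStar j|) - topNorm K xStar) - ρStar * |c| := by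
      calc ρStar * ((∑ j, |xStar j|) - |c| - topNorm K x')
          ≤ ρStar * ((∑ j, |xStar j|) - |c| - topNorm K xStar) :=
            mul_le_mul_of_nonneg_left (by linarith) hρpos.le
        _ = ρStar * ((∑ j, |xStar j|) - topNorm K xStar) - ρStar * |c| := by ring
    have key : ρStar * |c| ≤ c * I + c ^ 2 * B / 2 := by linarith
    have hcI : c * I ≤ |c| * |I| := (le_abs_self _).trans (abs_mul _ _).le
    have hc2B : c ^ 2 * B / 2 ≤ |c| * (q * B / 2) := by
      nlinarith [mul_nonneg (sub_nonneg.2 (mul_le_mul_of_nonneg_left hci (abs_nonneg c))) hBnn,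
        sq_abs c]
    have hBabs : |B| = B := abs_of_nonneg hBnn
    have final : ρStar * |c| ≤
        (q * (w + |B| / 2) + |(Φᵀ.mulVec y) i|) * |c| := by
      calc ρStar * |c| ≤ c * I + c ^ 2 * B / 2 := key
        _ ≤ |c| * |I| + |c| * (q * B / 2) := by linarith
        _ ≤ |c| * (|(Φᵀ.mulVec y) i| + w * q) + |c| * (q * B / 2) := by
            have := mul_le_mul_of_nonneg_left hIb (abs_nonneg c)
            linarith
        _ = (q * (w + B / 2) + |(Φᵀ.mulVec y) i|) * |c| := by ring
        _ = (q * (w + |B| / 2) + |(Φᵀ.mulVec y) i|) * |c| := by rw [hBabs]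
    exact absurd final (not_le.2 (mul_lt_mul_of_pos_right (hρ i) hcpos))
  refine ⟨hsp, fun x hx => ?_⟩
  have hx0 := top_eq_l1 hK x hx
  have hxs := top_le_l1 hK xStar
  have h := hmin x
  rw [hF, hF, hx0, sub_self, mul_zero, add_zero] at h
  linarith [mul_nonneg hρpos.le (sub_nonneg.2 hxs)]
end
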